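/- arXiv:2309.12465 — 4 statements merged into one kernel-verified Lean document; each statement's English description precedes it below -/
import Mathlib

section
/- Let g be a Lie ring, h ∈ g, δ = ad_h, and n ≥ 1 an integer such that ker(δⁿ) is an abelian Lie subring of g (that is, any two elements x, y ∈ g with δⁿ x = δⁿ y = 0 satisfy [x,y] = 0). Then ker(δ^{n+1}) is closed under the Lie bracket: for all x, y ∈ g with δ^{n+1} x = δ^{n+1} y = 0, one has δ^{n+1}([x,y]) = 0. -/
theorem Function.iterate_eq_zero_of_le {α : Type*} [Zero α] {f : α → α} (hf : f 0 = 0)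
    {x : α} {m k : ℕ} (hx : f^[m] x = 0) (hmk : m ≤ k) : f^[k] x = 0 := by
  obtain ⟨j, rfl⟩ := Nat.exists_eq_add_of_le hmk
  rw [Nat.add_comm, Function.iterate_add_apply, hx, Function.iterate_fixed hf]

namespace LieDerivation

variable {R L : Type*} [CommRing R] [LieRing L] [LieAlgebra R L]

theorem iterate_succ_apply_lie_eq_zero (D : LieDerivation R L L) {n : ℕ}
    (habelian : ∀ x y : L, D^[n] x = 0 → D^[n] y = 0 → ⁅x, y⁆ = 0) {x y : L}
    (hx : D^[n + 1] x = 0) (hy : D^[n + 1] y = 0) : D^[n + 1] ⁅x, y⁆ = 0 := by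
  have hD : D 0 = 0 := map_zero D
  -- In the Leibniz expansion every term with `i, j ≥ 1` brackets two elements of `ker D^[n]`.
  rw [iterate_apply_lie]
  refine Finset.sum_eq_zero ?_
  rintro ⟨i, j⟩ hij
  rw [Finset.HasAntidiagonal.mem_antidiagonal] at hij
  dsimp only at hij ⊢
  rcases Nat.eq_zero_or_pos i with rfl | hi
  · obtain rfl : j = n + 1 := by omega
    rw [hy, lie_zero, smul_zero]
  rcases Nat.eq_zero_or_pos j with rfl | hj
  · obtain rfl : i = n + 1 := by omega
    rw [hx, zero_lie, smul_zero]
  have hxi : D^[n] (D^[i] x) = 0 := by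
    rw [← Function.iterate_add_apply]
    exact Function.iterate_eq_zero_of_le hD hx (by omega)
  have hyj : D^[n] (D^[j] y) = 0 := by
    rw [← Function.iterate_add_apply]
    exact Function.iterate_eq_zero_of_le hD hy (by omega)
  rw [habelian _ _ hxi hyj, smul_zero]

end LieDerivation

theorem stmt_2_general {L : Type*} [LieRing L] (h : L) (n : ℕ)
    (habelian : ∀ x y : L,
      (fun z => ⁅h, z⁆)^[n] x = 0 → (fun z => ⁅h, z⁆)^[n] y = 0 → ⁅x, y⁆ = 0) :
    ∀ x y : L,
      (fun z => ⁅h, z⁆)^[n + 1] x = 0 → (fun z => ⁅h, z⁆)^[n + 1] y = 0 →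
      (fun z => ⁅h, z⁆)^[n + 1] ⁅x, y⁆ = 0 := by
  have had : (fun z : L => ⁅h, z⁆) = ⇑(LieDerivation.ad ℤ L h) := by
    funext z
    rw [LieDerivation.ad_apply_apply]
  rw [had] at habelian ⊢
  intro x y hx hy
  exact (LieDerivation.ad ℤ L h).iterate_succ_apply_lie_eq_zero habelian hx hy

/-- If ker(δⁿ) is abelian for δ = ad_h, then ker(δ^{n+1}) is closed under the bracket. -/
theorem stmt_2 {L : Type*} [LieRing L] (h : L) (n : ℕ) (hn : 1 ≤ n)
    (habelian : ∀ x y : L,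
      (fun z => ⁅h, z⁆)^[n] x = 0 → (fun z => ⁅h, z⁆)^[n] y = 0 → ⁅x, y⁆ = 0) :
    ∀ x y : L,
      (fun z => ⁅h, z⁆)^[n + 1] x = 0 → (fun z => ⁅h, z⁆)^[n + 1] y = 0 →
      (fun z => ⁅h, z⁆)^[n + 1] ⁅x, y⁆ = 0 :=
  stmt_2_general h n habelian
end

section
/- Let g be a simple Lie ring (nonabelian, with no ideals other than 0 and g), let h be a Lie subring of g with h ≠ g, and let I = {x ∈ h : [x, g] ⊆ h}. Define the descending series I^{[0]} = I, I^{[n+1]} = [I, I^{[n]}]. Then for every n ≥ 0 one has [I^{[n+1]}, g] ⊆ I^{[n]}. Consequently, if I^{[n+1]} = I^{[n]} for some n, then I^{[n]} is an ideal of g contained in h, hence I^{[n]} = 0, so I is nilpotent. -/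
/-- The additive subgroup generated by brackets of elements of two additive subgroups. -/
def lieBracketSubgroup {L : Type*} [LieRing L] (A B : AddSubgroup L) : AddSubgroup L :=
  AddSubgroup.closure {z : L | ∃ a ∈ A, ∃ b ∈ B, z = ⁅a, b⁆}

/-- The descending series I^{[0]} = I, I^{[n+1]} = [I, I^{[n]}]. -/
def lieLowerSeries {L : Type*} [LieRing L] (I : AddSubgroup L) : ℕ → AddSubgroup L
  | 0 => I
  | n + 1 => lieBracketSubgroup I (lieLowerSeries I n)

/-!
Every step is the Jacobi identity `⁅⁅a, b⁆, y⁆ = ⁅a, ⁅b, y⁆⁆ - ⁅b, ⁅a, y⁆⁆` applied to a generator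
`⁅a, b⁆` of `I^{[n+1]}`. Since `⁅a, y⁆ ∈ s` for `a ∈ I`, this needs that `I`, and then every
`I^{[n]}`, is stable under bracketing with the subring `s`. If the series stabilises at `n`, the
inclusion `[I^{[n+1]}, L] ⊆ I^{[n]}` makes `I^{[n]}` an ideal of `L`; it lies in `s ≠ L`, so it
is `0`.
-/

section

variable {L : Type*} [LieRing L]

theorem lie_mem_lieBracketSubgroup {A B : AddSubgroup L} {a b : L} (ha : a ∈ A) (hb : b ∈ B) :
    ⁅a, b⁆ ∈ lieBracketSubgroup A B :=
  AddSubgroup.subset_closure ⟨a, ha, b, hb, rfl⟩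

theorem lieBracketSubgroup_le {A B K : AddSubgroup L} (h : ∀ a ∈ A, ∀ b ∈ B, ⁅a, b⁆ ∈ K) :
    lieBracketSubgroup A B ≤ K :=
  (AddSubgroup.closure_le K).2 fun _ ⟨a, ha, b, hb, hz⟩ => hz ▸ h a ha b hb

theorem lie_mem_of_mem_lieBracketSubgroup {A B K : AddSubgroup L} {x y : L}
    (h : ∀ a ∈ A, ∀ b ∈ B, ⁅⁅a, b⁆, y⁆ ∈ K) (hx : x ∈ lieBracketSubgroup A B) : ⁅x, y⁆ ∈ K := by
  induction hx using AddSubgroup.closure_induction with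
  | mem z hz =>
    obtain ⟨a, ha, b, hb, rfl⟩ := hz
    exact h a ha b hb
  | zero => simpa only [zero_lie] using K.zero_mem
  | add u v _ _ hu hv => simpa only [add_lie] using K.add_mem hu hv
  | neg u _ hu => simpa only [neg_lie] using K.neg_mem hu

theorem lieLowerSeries_le_self {I : AddSubgroup L} (hI : ∀ a ∈ I, ∀ b ∈ I, ⁅a, b⁆ ∈ I) :
    ∀ n, lieLowerSeries I n ≤ I
  | 0 => le_rfl
  | n + 1 => lieBracketSubgroup_le fun a ha _ hb => hI a ha _ (lieLowerSeries_le_self hI n hb)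

theorem lie_mem_lieLowerSeries_of_mem_right {I : AddSubgroup L} {s : Set L}
    (hIs : ∀ a ∈ I, ∀ c ∈ s, ⁅a, c⁆ ∈ I) :
    ∀ n, ∀ b ∈ lieLowerSeries I n, ∀ c ∈ s, ⁅b, c⁆ ∈ lieLowerSeries I n
  | 0 => hIs
  | n + 1 => fun _ hb c hc => lie_mem_of_mem_lieBracketSubgroup (fun a ha x hx => by
      rw [lie_lie, ← lie_skew x ⁅a, c⁆]
      exact sub_mem (lie_mem_lieBracketSubgroup ha
        (lie_mem_lieLowerSeries_of_mem_right hIs n x hx c hc))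
        (neg_mem (lie_mem_lieBracketSubgroup (hIs a ha c hc) hx))) hb

theorem lie_mem_lieLowerSeries_of_mem_succ {I : AddSubgroup L} {s : Set L}
    (hIs : ∀ a ∈ I, ∀ c ∈ s, ⁅a, c⁆ ∈ I) (hIL : ∀ a ∈ I, ∀ y, ⁅a, y⁆ ∈ s) (n : ℕ) :
    ∀ x ∈ lieLowerSeries I (n + 1), ∀ y, ⁅x, y⁆ ∈ lieLowerSeries I n := by
  induction n with
  | zero =>
    exact fun _ hx y => lie_mem_of_mem_lieBracketSubgroup (fun a ha b hb => by
      rw [lie_lie]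
      exact sub_mem (hIs a ha _ (hIL b hb y)) (hIs b hb _ (hIL a ha y))) hx
  | succ n ih =>
    exact fun _ hx y => lie_mem_of_mem_lieBracketSubgroup (fun a ha b hb => by
      rw [lie_lie]
      exact sub_mem (lie_mem_lieBracketSubgroup ha (ih b hb y))
        (lie_mem_lieLowerSeries_of_mem_right hIs (n + 1) b hb _ (hIL a ha y))) hx

theorem lie_mem_of_mem_of_mem_subring {s I : AddSubgroup L}
    (hs : ∀ x ∈ s, ∀ y ∈ s, ⁅x, y⁆ ∈ s) (hI : ∀ x : L, x ∈ I ↔ x ∈ s ∧ ∀ y : L, ⁅x, y⁆ ∈ s) :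
    ∀ a ∈ I, ∀ c ∈ s, ⁅a, c⁆ ∈ I := by
  intro a ha c hc
  have haL := ((hI a).1 ha).2
  refine (hI _).2 ⟨haL c, fun z => ?_⟩
  rw [lie_lie]
  exact sub_mem (haL _) (hs c hc _ (haL z))

end

theorem stmt_6_general {L : Type*} [LieRing L]
    (hsimple : ∀ J : AddSubgroup L, (∀ x : L, ∀ j ∈ J, ⁅x, j⁆ ∈ J) → J = ⊥ ∨ J = ⊤)
    (s : AddSubgroup L)
    (hs : ∀ x ∈ s, ∀ y ∈ s, ⁅x, y⁆ ∈ s)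
    (hsne : s ≠ ⊤)
    (I : AddSubgroup L)
    (hI : ∀ x : L, x ∈ I ↔ x ∈ s ∧ ∀ y : L, ⁅x, y⁆ ∈ s) :
    (∀ n : ℕ, ∀ x ∈ lieLowerSeries I (n + 1), ∀ y : L, ⁅x, y⁆ ∈ lieLowerSeries I n) ∧
    (∀ n : ℕ, lieLowerSeries I (n + 1) = lieLowerSeries I n → lieLowerSeries I n = ⊥) := by
  have hIs := lie_mem_of_mem_of_mem_subring hs hI
  have hmain := lie_mem_lieLowerSeries_of_mem_succ hIs fun a ha => ((hI a).1 ha).2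
  refine ⟨hmain, fun n hn => ?_⟩
  have hideal : ∀ x : L, ∀ j ∈ lieLowerSeries I n, ⁅x, j⁆ ∈ lieLowerSeries I n := by
    intro x j hj
    rw [← lie_skew]
    exact neg_mem (hmain n j (hn ▸ hj) x)
  refine (hsimple _ hideal).resolve_right fun htop => hsne (eq_top_iff.2 fun x _ => ?_)
  have hxI : x ∈ I :=
    lieLowerSeries_le_self (fun a ha b hb => hIs a ha b ((hI b).1 hb).1) n (htop ▸ trivial)
  exact ((hI x).1 hxI).1

/-- In a simple Lie ring g, for h a proper subring and I = {x ∈ h : [x,g] ⊆ h},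
one has [I^{[n+1]}, g] ⊆ I^{[n]}; and if the series stabilises at n then I^{[n]} = 0. -/
theorem stmt_6 {L : Type*} [LieRing L]
    (hnonab : ∃ x y : L, ⁅x, y⁆ ≠ 0)
    (hsimple : ∀ J : AddSubgroup L, (∀ x : L, ∀ j ∈ J, ⁅x, j⁆ ∈ J) → J = ⊥ ∨ J = ⊤)
    (s : AddSubgroup L)
    (hs : ∀ x ∈ s, ∀ y ∈ s, ⁅x, y⁆ ∈ s)
    (hsne : s ≠ ⊤)
    (I : AddSubgroup L)
    (hI : ∀ x : L, x ∈ I ↔ x ∈ s ∧ ∀ y : L, ⁅x, y⁆ ∈ s) :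
    (∀ n : ℕ, ∀ x ∈ lieLowerSeries I (n + 1), ∀ y : L, ⁅x, y⁆ ∈ lieLowerSeries I n) ∧
    (∀ n : ℕ, lieLowerSeries I (n + 1) = lieLowerSeries I n → lieLowerSeries I n = ⊥) :=
  stmt_6_general hsimple s hs hsne I hI
end

section
/- Let g be a Lie ring, h ∈ g, and suppose g decomposes as an internal direct sum of additive subgroups g = E_{-1} ⊕ E_0 ⊕ E_1 ⊕ E_2 where E_k = {y : [h,y] = k y}, with h ∈ E_0, and suppose the characteristic p of the additive group satisfies p = 0 or p > 5 (so that E_3 = E_{-2} etc. vanish as the indices k ∈ {-1,0,1,2} are distinct and k+ℓ ∉ {-1,0,1,2} implies [E_k,E_ℓ]=0). If [E_{-1}, E_2] = 0 and E_0 = [E_{-1}, E_1], then E_2 = 0, provided 2 is invertible (no additive 2-torsion). -/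
/-! The element `h` is a sum of brackets `⁅x, y⁆` with `x ∈ E₋₁`, `y ∈ E₁`. For `w ∈ E₂` both
`⁅x, w⁆ ∈ [E₋₁, E₂] = 0` and `⁅y, w⁆ ∈ E₃ = 0` vanish, so by the Jacobi identity `⁅h, w⁆ = 0`.
But `⁅h, w⁆ = 2 • w`, and there is no `2`-torsion. -/

section

variable {L : Type*} [LieRing L]

theorem lie_lie_eq_add_zsmul_of_eigen {h x y : L} {m n : ℤ} (hx : ⁅h, x⁆ = m • x)
    (hy : ⁅h, y⁆ = n • y) : ⁅h, ⁅x, y⁆⁆ = (m + n) • ⁅x, y⁆ := by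
  rw [leibniz_lie, hx, hy, smul_lie, lie_smul, add_smul]

theorem lie_eq_zero_of_mem_closure {S : Set L} {z w : L} (hz : z ∈ AddSubgroup.closure S)
    (hS : ∀ s ∈ S, ⁅s, w⁆ = 0) : ⁅z, w⁆ = 0 := by
  induction hz using AddSubgroup.closure_induction with
  | mem s hs => exact hS s hs
  | zero => exact zero_lie w
  | add a b _ _ ha hb => rw [add_lie, ha, hb, add_zero]
  | neg a _ ha => rw [neg_lie, ha, neg_zero]

theorem lie_lie_eq_zero_of_lie_eq_zero {x y w : L} (hx : ⁅x, w⁆ = 0) (hy : ⁅y, w⁆ = 0) :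
    ⁅⁅x, y⁆, w⁆ = 0 := by
  rw [lie_lie, hx, hy, lie_zero, lie_zero, sub_zero]

end

theorem stmt_7_general {L : Type*} [LieRing L] (h : L)
    (h2 : ∀ x : L, 2 • x = 0 → x = 0)
    (hE3 : ∀ x : L, ⁅h, x⁆ = (3 : ℤ) • x → x = 0)
    (hm1_2 : ∀ x y : L, ⁅h, x⁆ = -x → ⁅h, y⁆ = (2 : ℤ) • y → ⁅x, y⁆ = 0)
    (hE0 : h ∈ AddSubgroup.closure
      {z : L | ∃ x y : L, ⁅h, x⁆ = -x ∧ ⁅h, y⁆ = y ∧ z = ⁅x, y⁆}) :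
    ∀ w : L, ⁅h, w⁆ = (2 : ℤ) • w → w = 0 := by
  intro w hw
  have hhw : ⁅h, w⁆ = 0 := by
    refine lie_eq_zero_of_mem_closure hE0 ?_
    rintro _ ⟨x, y, hx, hy, rfl⟩
    have hyw : ⁅y, w⁆ = 0 := hE3 _ <| by
      rw [lie_lie_eq_add_zsmul_of_eigen (m := 1) (by rw [hy, one_zsmul]) hw]
      norm_num
    exact lie_lie_eq_zero_of_lie_eq_zero (hm1_2 x w hx hw) hyw
  apply h2
  rw [two_nsmul, ← two_zsmul, ← hw, hhw]

/-- If g = E_{-1} ⊕ E_0 ⊕ E_1 ⊕ E_2 with respect to ad_h, with h ∈ E_0,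
E_3 = 0 (as forced by p = 0 or p > 5), [E_{-1}, E_2] = 0,
E_0 = [E_{-1}, E_1] (so in particular h is a sum of brackets [e_{-1}, e_1]),
and no additive 2-torsion, then E_2 = 0. -/
theorem stmt_7 {L : Type*} [LieRing L] (h : L)
    (h2 : ∀ x : L, 2 • x = 0 → x = 0)
    (hh0 : ⁅h, h⁆ = 0)
    (hspan : ∀ x : L, ∃ a b c d : L, ⁅h, a⁆ = -a ∧ ⁅h, b⁆ = 0 ∧ ⁅h, c⁆ = c ∧
      ⁅h, d⁆ = (2 : ℤ) • d ∧ x = a + b + c + d)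
    (hE3 : ∀ x : L, ⁅h, x⁆ = (3 : ℤ) • x → x = 0)
    (hm1_2 : ∀ x y : L, ⁅h, x⁆ = -x → ⁅h, y⁆ = (2 : ℤ) • y → ⁅x, y⁆ = 0)
    (hE0 : h ∈ AddSubgroup.closure
      {z : L | ∃ x y : L, ⁅h, x⁆ = -x ∧ ⁅h, y⁆ = y ∧ z = ⁅x, y⁆}) :
    ∀ w : L, ⁅h, w⁆ = (2 : ℤ) • w → w = 0 :=
  stmt_7_general h h2 hE3 hm1_2 hE0
end

section
/- Let g be a Lie ring, 𝔞 ⊆ g an abelian subring, and work modulo the additive subgroup [𝔞, g]. For any a₁,…,a_n ∈ 𝔞 and x, y ∈ g, setting f = ad_{a_1} ∘ ⋯ ∘ ad_{a_n}, one has [f(x), y] ≡ (−1)ⁿ [x, f(y)] modulo [𝔞, g]. -/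
/-!
Induct on the number of factors. For one more factor `a`, the Jacobi identity gives
`⁅⁅a, f x⁆, y⁆ = ⁅a, ⁅f x, y⁆⁆ - ⁅f x, ⁅a, y⁆⁆`; the first term lies in `[𝔞, g]`, and since `ad a`
commutes with every `ad b`, `b ∈ 𝔞`, the induction hypothesis applies to the pair `x, ⁅a, y⁆`.
-/

section

variable {L : Type*} [LieRing L]

theorem lie_lie_comm_of_lie_eq_zero {a b : L} (h : ⁅a, b⁆ = 0) (z : L) :
    ⁅a, ⁅b, z⁆⁆ = ⁅b, ⁅a, z⁆⁆ :=
  sub_eq_zero.mp (by rw [← lie_lie, h, zero_lie])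

theorem foldr_lie_lie_comm {a : L} (l : List L) (hl : ∀ b ∈ l, ⁅a, b⁆ = 0) (z : L) :
    l.foldr (fun b z => ⁅b, z⁆) ⁅a, z⁆ = ⁅a, l.foldr (fun b z => ⁅b, z⁆) z⁆ := by
  induction l with
  | nil => rfl
  | cons b t ih =>
    rw [List.foldr_cons, List.foldr_cons, ih fun c hc => hl c (List.mem_cons_of_mem b hc),
      lie_lie_comm_of_lie_eq_zero (hl b List.mem_cons_self)]

theorem lie_foldr_lie_sub_mem {S : AddSubgroup L} (l : List L)
    (hcomm : ∀ a ∈ l, ∀ b ∈ l, ⁅a, b⁆ = 0) (hS : ∀ a ∈ l, ∀ z : L, ⁅a, z⁆ ∈ S) (x y : L) :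
    ⁅l.foldr (fun a z => ⁅a, z⁆) x, y⁆
      - ((-1 : ℤ) ^ l.length) • ⁅x, l.foldr (fun a z => ⁅a, z⁆) y⁆ ∈ S := by
  induction l generalizing y with
  | nil => simp
  | cons a t ih =>
    have htail : ∀ b ∈ t, b ∈ a :: t := fun b hb => List.mem_cons_of_mem a hb
    set fx := t.foldr (fun a z => ⁅a, z⁆) x
    have hcomm_a : t.foldr (fun b z => ⁅b, z⁆) ⁅a, y⁆ = ⁅a, t.foldr (fun b z => ⁅b, z⁆) y⁆ :=
      foldr_lie_lie_comm t (fun b hb => hcomm a List.mem_cons_self b (htail b hb)) y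
    have hsplit :
        ⁅⁅a, fx⁆, y⁆ - ((-1 : ℤ) ^ (t.length + 1)) • ⁅x, ⁅a, t.foldr (fun a z => ⁅a, z⁆) y⁆⁆
          = ⁅a, ⁅fx, y⁆⁆
            - (⁅fx, ⁅a, y⁆⁆
              - ((-1 : ℤ) ^ t.length) • ⁅x, t.foldr (fun a z => ⁅a, z⁆) ⁅a, y⁆⁆) := by
      rw [lie_lie, hcomm_a, pow_succ]
      module
    rw [List.foldr_cons, List.foldr_cons, List.length_cons, hsplit]
    exact S.sub_mem (hS a List.mem_cons_self _)
      (ih (fun b hb c hc => hcomm b (htail b hb) c (htail c hc))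
        (fun b hb => hS b (htail b hb)) _)

end

/-- For an abelian subring 𝔞 and f a composite of n maps ad_{a_i} with a_i ∈ 𝔞,
[f(x), y] ≡ (−1)ⁿ [x, f(y)] modulo the additive subgroup [𝔞, g]. -/
theorem stmt_8 {L : Type*} [LieRing L]
    (𝔞 : AddSubgroup L)
    (habelian : ∀ a ∈ 𝔞, ∀ b ∈ 𝔞, ⁅a, b⁆ = 0)
    (l : List L) (hl : ∀ a ∈ l, a ∈ 𝔞) (x y : L) :
    ⁅l.foldr (fun a z => ⁅a, z⁆) x, y⁆
      - ((-1 : ℤ) ^ l.length) • ⁅x, l.foldr (fun a z => ⁅a, z⁆) y⁆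
      ∈ AddSubgroup.closure {w : L | ∃ a ∈ 𝔞, ∃ z : L, w = ⁅a, z⁆} :=
  lie_foldr_lie_sub_mem l (fun a ha b hb => habelian a (hl a ha) b (hl b hb))
    (fun a ha z => AddSubgroup.subset_closure (Set.mem_ofPred.mpr ⟨a, hl a ha, z, rfl⟩)) x y
end
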